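/- Let W_i(n), i = 0,…,k-1, be the solutions of f(n) = ∑_{j=1}^k β_j f(n-j) with initial conditions W_i(n) = δ_{in} for 0 ≤ n ≤ k-1. Then for 0 ≤ i ≤ k-2 and all n ≥ k, W_i(n) = ∑_{s=0}^{i} β_{k+s-i} · W_{k-1}(n-s-1). -/

import Mathlib

/-!
Shifting a solution of the recurrence by one step gives again a solution, and a solution is
determined by its first `k` values. Comparing initial values, the shifted fundamental solutions
satisfy `W₀(n+1) = β_k W_{k-1}(n)` and `W_{i+1}(n+1) = W_i(n) + β_{k-i-1} W_{k-1}(n)`;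
unrolling the second identity down to the first gives the formula.
-/

open Finset

namespace LinearRecurrence

variable {R : Type*} [CommSemiring R]

theorem IsSolution.shift {E : LinearRecurrence R} {u : ℕ → R} (h : E.IsSolution u) :
    E.IsSolution fun n ↦ u (n + 1) := fun n ↦ by
  simpa only [add_right_comm] using h (n + 1)

/-- The recurrence `u n = ∑_{j=1}^k β j * u (n - j)`. -/
def ofLagCoeffs (k : ℕ) (β : ℕ → R) : LinearRecurrence R :=
  ⟨k, fun i ↦ β (k - i)⟩

@[simp] theorem ofLagCoeffs_order (k : ℕ) (β : ℕ → R) : (ofLagCoeffs k β).order = k := rfl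

@[simp] theorem ofLagCoeffs_coeffs (k : ℕ) (β : ℕ → R) (i : Fin k) :
    (ofLagCoeffs k β).coeffs i = β (k - i) := rfl

theorem isSolution_ofLagCoeffs_iff {k : ℕ} {β : ℕ → R} {u : ℕ → R} :
    (ofLagCoeffs k β).IsSolution u ↔
      ∀ n, k ≤ n → u n = ∑ j ∈ range k, β (j + 1) * u (n - (j + 1)) := by
  have reflect (m : ℕ) : ∑ i : Fin k, β (k - i) * u (m + i) =
      ∑ j ∈ range k, β (j + 1) * u (m + k - (j + 1)) := by
    rw [Fin.sum_univ_eq_sum_range (fun i ↦ β (k - i) * u (m + i)), ← sum_range_reflect]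
    refine sum_congr rfl fun j hj ↦ ?_
    have hj : j < k := mem_range.mp hj
    rw [show k - (k - 1 - j) = j + 1 by omega, show m + (k - 1 - j) = m + k - (j + 1) by omega]
  constructor
  · rintro h n hn
    obtain ⟨m, rfl⟩ := Nat.exists_eq_add_of_le' hn
    exact (h m).trans (reflect m)
  · exact fun h m ↦ (h (m + k) (Nat.le_add_left k m)).trans (reflect m).symm

section Fundamental

variable {k : ℕ} {β : ℕ → R} {W : Fin k → ℕ → R}

theorem fundamental_apply_order
    (hW : ∀ i, (ofLagCoeffs k β).IsSolution (W i))
    (hinit : ∀ (i : Fin k) (n : ℕ), n < k → W i n = if (i : ℕ) = n then 1 else 0)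
    (i : Fin k) : W i k = β (k - i) := by
  have := hW i 0
  simp only [zero_add, ofLagCoeffs_order, ofLagCoeffs_coeffs] at this
  rw [this]
  simp only [hinit _ _ (Fin.is_lt _), Fin.val_inj, mul_ite, mul_one, mul_zero]
  exact Fintype.sum_ite_eq i _

theorem fundamental_succ_apply_succ
    (hW : ∀ i, (ofLagCoeffs k β).IsSolution (W i))
    (hinit : ∀ (i : Fin k) (n : ℕ), n < k → W i n = if (i : ℕ) = n then 1 else 0)
    {j : ℕ} (hj : j + 1 < k) (n : ℕ) :
    W ⟨j + 1, hj⟩ (n + 1) =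
      W ⟨j, by omega⟩ n + β (k - (j + 1)) * W ⟨k - 1, by omega⟩ n := by
  set E := ofLagCoeffs k β
  have hsol :
      E.IsSolution fun n ↦ W ⟨j, by omega⟩ n + β (k - (j + 1)) * W ⟨k - 1, by omega⟩ n :=
    E.solSpace.add_mem (hW _) (E.solSpace.smul_mem _ (hW _))
  refine congrFun ((E.eq_iff_eqOn_range_order _ _ (hW _).shift hsol).mpr fun m hm ↦ ?_) n
  have hm : m < k := by simpa [E] using hm
  obtain hlt | rfl : m + 1 < k ∨ m = k - 1 := by omega
  · simp only [hinit _ _ hlt, hinit _ _ hm]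
    split_ifs <;> first | omega | simp
  · simp only [Nat.sub_add_cancel (by omega : 1 ≤ k), fundamental_apply_order hW hinit,
      hinit _ _ hm]
    simp [show j ≠ k - 1 by omega]

theorem fundamental_zero_apply_succ
    (hW : ∀ i, (ofLagCoeffs k β).IsSolution (W i))
    (hinit : ∀ (i : Fin k) (n : ℕ), n < k → W i n = if (i : ℕ) = n then 1 else 0)
    (hk : 0 < k) (n : ℕ) :
    W ⟨0, hk⟩ (n + 1) = β k * W ⟨k - 1, by omega⟩ n := by
  set E := ofLagCoeffs k β
  refine congrFun ((E.eq_iff_eqOn_range_order _ _ (hW _).shift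
    (E.solSpace.smul_mem (β k) (hW _))).mpr fun m hm ↦ ?_) n
  have hm : m < k := by simpa [E] using hm
  obtain hlt | rfl : m + 1 < k ∨ m = k - 1 := by omega
  · simp only [Pi.smul_apply, smul_eq_mul, hinit _ _ hlt, hinit _ _ hm]
    split_ifs <;> first | omega | simp_all
  · simp [Nat.sub_add_cancel (by omega : 1 ≤ k), fundamental_apply_order hW hinit, hinit _ _ hm]

theorem fundamental_apply_eq_sum
    (hW : ∀ i, (ofLagCoeffs k β).IsSolution (W i))
    (hinit : ∀ (i : Fin k) (n : ℕ), n < k → W i n = if (i : ℕ) = n then 1 else 0)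
    {i : ℕ} (hi : i < k) {n : ℕ} (hn : i < n) :
    W ⟨i, hi⟩ n =
      ∑ s ∈ range (i + 1), β (k + s - i) * W ⟨k - 1, by omega⟩ (n - s - 1) := by
  obtain ⟨m, rfl⟩ : ∃ m, n = m + 1 := ⟨n - 1, by omega⟩
  induction i generalizing m with
  | zero => simp [fundamental_zero_apply_succ hW hinit]
  | succ i ih =>
    obtain ⟨m, rfl⟩ : ∃ l, m = l + 1 := ⟨m - 1, by omega⟩
    rw [fundamental_succ_apply_succ hW hinit, ih (by omega) m (by omega),
      sum_range_succ' _ (i + 1)]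
    congr 1
    refine sum_congr rfl fun s _ ↦ ?_
    rw [show k + (s + 1) - (i + 1) = k + s - i by omega]
    congr 2
    omega

end Fundamental

end LinearRecurrence

theorem stmt_14 (k : ℕ) (hk : 2 ≤ k) (β : ℕ → ℂ)
    (W : Fin k → ℕ → ℂ)
    (hinit : ∀ (i : Fin k) (n : ℕ), n < k → W i n = if (i : ℕ) = n then 1 else 0)
    (hrec : ∀ (i : Fin k) (n : ℕ), k ≤ n → W i n = ∑ j ∈ range k, β (j + 1) * W i (n - (j + 1)))
    (i : Fin k) (n : ℕ) (hn : k ≤ n) :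
    W i n = ∑ s ∈ range ((i : ℕ) + 1),
      β (k + s - (i : ℕ)) * W ⟨k - 1, by omega⟩ (n - s - 1) :=
  LinearRecurrence.fundamental_apply_eq_sum
    (fun j ↦ LinearRecurrence.isSolution_ofLagCoeffs_iff.mpr (hrec j)) hinit i.isLt (by omega)
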